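/- (Isolated singularities are removable.) Assume i₁, i₂, i₃ are linearly independent over ℝ and f₁(E₃) = f₂(E₃) = ℂ. Let ζ₀ ∈ E₃, ξ₁₀ = f₁(ζ₀), ξ₂₀ = f₂(ζ₀), 0 < R ≤ ∞. Let F₁, F₃ be holomorphic on {ξ : 0 < |ξ − ξ₁₀| < R} and F₂, F₄ holomorphic on {ξ : 0 < |ξ − ξ₂₀| < R}, and define Φ on K⁰_ζ = {ζ ∈ E₃ : 0 < |f₁(ζ) − ξ₁₀| < R, 0 < |f₂(ζ) − ξ₂₀| < R} by Φ(ζ) = F₁(f₁(ζ))e₁ + F₂(f₂(ζ))e₂ + F₃(f₁(ζ))e₃ + F₄(f₂(ζ))e₄. If Φ has a finite limit (as ζ → w within K⁰_ζ) at every point w ≠ ζ₀ of K̃⁰_ζ ∩ (ζ₀ + (L¹_ζ ∪ L²_ζ)), where K̃⁰_ζ = {ζ ∈ E₃ : |f₁(ζ) − ξ₁₀| < R, |f₂(ζ) − ξ₂₀| < R}, then Φ also has a finite limit at ζ₀ as ζ → ζ₀ within K⁰_ζ; that is, an isolated singular point of Φ can only be removable. -/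

import Mathlib

/-!
On `K⁰` the `e₁`- and `e₃`-components of `Φ` are `F₁, F₃` evaluated at `f₁(ζ)`, and its `e₂`- and
`e₄`-components are `F₂, F₄` evaluated at `f₂(ζ)`. Take a point `w ≠ ζ₀` of `ζ₀ + L¹` close to `ζ₀`:
there `f₁(w) = ξ₁₀` but `f₂(w) ≠ ξ₂₀`. Since `f₁` maps `E₃` onto `ℂ`, every `ξ` near `ξ₁₀` is the
value of `f₁` at a point of `K⁰` near `w`, so the limit of `Φ` at `w` forces `F₁` and `F₃` to have
limits at `ξ₁₀`. Symmetrically, a point of `ζ₀ + L²` yields limits of `F₂` and `F₄` at `ξ₂₀`, and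
the four limits together give the limit of `Φ` at `ζ₀`.
-/

noncomputable section

/-- The algebra of complex quaternions ℍ(ℂ): quaternions over ℂ with
I² = J² = K² = -1, IJ = -JI = K, JK = -KJ = I, KI = -IK = J. -/
abbrev HC : Type := Quaternion ℂ

/-- The quaternion unit I. -/
def Iq : HC := ⟨0, 1, 0, 0⟩
/-- The quaternion unit J. -/
def Jq : HC := ⟨0, 0, 1, 0⟩
/-- The quaternion unit K. -/
def Kq : HC := ⟨0, 0, 0, 1⟩

/-- e₁ = (1 + iI)/2. -/
def e1 : HC := (2 : ℂ)⁻¹ • (1 + Complex.I • Iq)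
/-- e₂ = (1 - iI)/2. -/
def e2 : HC := (2 : ℂ)⁻¹ • (1 - Complex.I • Iq)
/-- e₃ = (iJ - K)/2. -/
def e3 : HC := (2 : ℂ)⁻¹ • (Complex.I • Jq - Kq)
/-- e₄ = (iJ + K)/2. -/
def e4 : HC := (2 : ℂ)⁻¹ • (Complex.I • Jq + Kq)

/-- The coefficient c₁ of q in the basis {e₁,e₂,e₃,e₄} (q = c₁e₁ + c₂e₂ + c₃e₃ + c₄e₄). -/
def coord1 (q : HC) : ℂ := q.re - Complex.I * q.imI
/-- The coefficient c₂ of q in the basis {e₁,e₂,e₃,e₄}. -/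
def coord2 (q : HC) : ℂ := q.re + Complex.I * q.imI
/-- The coefficient c₃ of q in the basis {e₁,e₂,e₃,e₄}. -/
def coord3 (q : HC) : ℂ := -(Complex.I * q.imJ) - q.imK
/-- The coefficient c₄ of q in the basis {e₁,e₂,e₃,e₄}. -/
def coord4 (q : HC) : ℂ := -(Complex.I * q.imJ) + q.imK

/-- The norm ‖c‖ = √(|c₁|² + |c₂|² + |c₃|² + |c₄|²) of c = c₁e₁ + c₂e₂ + c₃e₃ + c₄e₄. -/
def hnorm (q : HC) : ℝ :=
  Real.sqrt (‖coord1 q‖ ^ 2 + ‖coord2 q‖ ^ 2 +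
    ‖coord3 q‖ ^ 2 + ‖coord4 q‖ ^ 2)

/-- i₂ = a₁e₁ + a₂e₂. -/
def i2 (a₁ a₂ : ℂ) : HC := a₁ • e1 + a₂ • e2
/-- i₃ = b₁e₁ + b₂e₂. -/
def i3 (b₁ b₂ : ℂ) : HC := b₁ • e1 + b₂ • e2

/-- ζ = x·i₁ + y·i₂ + z·i₃ with i₁ = 1. -/
def zeta (a₁ a₂ b₁ b₂ : ℂ) (x y z : ℝ) : HC :=
  (x : ℂ) • (1 : HC) + (y : ℂ) • i2 a₁ a₂ + (z : ℂ) • i3 b₁ b₂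

/-- E₃ = {x i₁ + y i₂ + z i₃ : x, y, z ∈ ℝ}. -/
def E3 (a₁ a₂ b₁ b₂ : ℂ) : Set HC :=
  {q | ∃ x y z : ℝ, q = zeta a₁ a₂ b₁ b₂ x y z}

/-- ξ₁ = f₁(ζ) = x + y a₁ + z b₁. -/
def xi1 (a₁ b₁ : ℂ) (x y z : ℝ) : ℂ := (x : ℂ) + (y : ℂ) * a₁ + (z : ℂ) * b₁
/-- ξ₂ = f₂(ζ) = x + y a₂ + z b₂. -/
def xi2 (a₂ b₂ : ℂ) (x y z : ℝ) : ℂ := (x : ℂ) + (y : ℂ) * a₂ + (z : ℂ) * b₂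


/-- The punctured domain K⁰_ζ = {ζ ∈ E₃ : 0 < |f₁(ζ)-ξ₁₀| < R, 0 < |f₂(ζ)-ξ₂₀| < R}. -/
def K0 (a₁ a₂ b₁ b₂ ξ₁₀ ξ₂₀ : ℂ) (R : ENNReal) : Set HC :=
  {q | ∃ x y z : ℝ, q = zeta a₁ a₂ b₁ b₂ x y z ∧
    0 < ‖xi1 a₁ b₁ x y z - ξ₁₀‖ ∧
    ENNReal.ofReal (‖xi1 a₁ b₁ x y z - ξ₁₀‖) < R ∧
    0 < ‖xi2 a₂ b₂ x y z - ξ₂₀‖ ∧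
    ENNReal.ofReal (‖xi2 a₂ b₂ x y z - ξ₂₀‖) < R}

/-- Φ has the finite limit A as ζ → w with ζ ranging over S (w.r.t. the norm of ℍ(ℂ)). -/
def TendstoAt (Φ : HC → HC) (S : Set HC) (w A : HC) : Prop :=
  ∀ ε > (0 : ℝ), ∃ δ > (0 : ℝ), ∀ q ∈ S, hnorm (q - w) < δ → hnorm (Φ q - A) < ε

/-- ‖Φ(ζ)‖ → ∞ as ζ → w with ζ ranging over S. -/
def TendstoInftyAt (Φ : HC → HC) (S : Set HC) (w : HC) : Prop :=
  ∀ M : ℝ, ∃ δ > (0 : ℝ), ∀ q ∈ S, hnorm (q - w) < δ → M < hnorm (Φ q)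

open Filter Topology Module
open scoped Quaternion

lemma hnorm_nonneg (q : HC) : 0 ≤ hnorm q := Real.sqrt_nonneg _

lemma norm_coord1_le_hnorm (q : HC) : ‖coord1 q‖ ≤ hnorm q :=
  Real.le_sqrt_of_sq_le <| by
    nlinarith [sq_nonneg ‖coord2 q‖, sq_nonneg ‖coord3 q‖, sq_nonneg ‖coord4 q‖]

lemma norm_coord2_le_hnorm (q : HC) : ‖coord2 q‖ ≤ hnorm q :=
  Real.le_sqrt_of_sq_le <| by
    nlinarith [sq_nonneg ‖coord1 q‖, sq_nonneg ‖coord3 q‖, sq_nonneg ‖coord4 q‖]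

lemma norm_coord3_le_hnorm (q : HC) : ‖coord3 q‖ ≤ hnorm q :=
  Real.le_sqrt_of_sq_le <| by
    nlinarith [sq_nonneg ‖coord1 q‖, sq_nonneg ‖coord2 q‖, sq_nonneg ‖coord4 q‖]

lemma norm_coord4_le_hnorm (q : HC) : ‖coord4 q‖ ≤ hnorm q :=
  Real.le_sqrt_of_sq_le <| by
    nlinarith [sq_nonneg ‖coord1 q‖, sq_nonneg ‖coord2 q‖, sq_nonneg ‖coord3 q‖]

section Combination

variable (c₁ c₂ c₃ c₄ : ℂ)

lemma combo_eq_mk :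
    c₁ • e1 + c₂ • e2 + c₃ • e3 + c₄ • e4 =
      ⟨(c₁ + c₂) / 2, Complex.I * (c₁ - c₂) / 2, Complex.I * (c₃ + c₄) / 2, (c₄ - c₃) / 2⟩ := by
  ext <;> simp [e1, e2, e3, e4] <;> simp [Iq, Jq, Kq] <;> ring

lemma coord1_combo : coord1 (c₁ • e1 + c₂ • e2 + c₃ • e3 + c₄ • e4) = c₁ := by
  simp only [combo_eq_mk, coord1]
  linear_combination (-(c₁ - c₂) / 2) * Complex.I_sq

lemma coord2_combo : coord2 (c₁ • e1 + c₂ • e2 + c₃ • e3 + c₄ • e4) = c₂ := by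
  simp only [combo_eq_mk, coord2]
  linear_combination ((c₁ - c₂) / 2) * Complex.I_sq

lemma coord3_combo : coord3 (c₁ • e1 + c₂ • e2 + c₃ • e3 + c₄ • e4) = c₃ := by
  simp only [combo_eq_mk, coord3]
  linear_combination (-(c₃ + c₄) / 2) * Complex.I_sq

lemma coord4_combo : coord4 (c₁ • e1 + c₂ • e2 + c₃ • e3 + c₄ • e4) = c₄ := by
  simp only [combo_eq_mk, coord4]
  linear_combination (-(c₃ + c₄) / 2) * Complex.I_sq

lemma hnorm_combo_le :
    hnorm (c₁ • e1 + c₂ • e2 + c₃ • e3 + c₄ • e4) ≤ ‖c₁‖ + ‖c₂‖ + ‖c₃‖ + ‖c₄‖ := by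
  rw [hnorm, coord1_combo, coord2_combo, coord3_combo, coord4_combo]
  refine Real.sqrt_le_iff.2 ⟨by positivity, ?_⟩
  nlinarith [norm_nonneg c₁, norm_nonneg c₂, norm_nonneg c₃, norm_nonneg c₄,
    mul_nonneg (norm_nonneg c₁) (norm_nonneg c₂)]

lemma pair_eq_combo : c₁ • e1 + c₂ • e2 = c₁ • e1 + c₂ • e2 + (0 : ℂ) • e3 + (0 : ℂ) • e4 := by
  module

lemma hnorm_pair_le : hnorm (c₁ • e1 + c₂ • e2) ≤ ‖c₁‖ + ‖c₂‖ := by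
  simpa [← pair_eq_combo] using hnorm_combo_le c₁ c₂ 0 0

lemma coord1_pair : coord1 (c₁ • e1 + c₂ • e2) = c₁ := by
  rw [pair_eq_combo, coord1_combo]

lemma coord2_pair : coord2 (c₁ • e1 + c₂ • e2) = c₂ := by
  rw [pair_eq_combo, coord2_combo]

end Combination

def hnhds (w : HC) : Filter HC := comap (fun q => hnorm (q - w)) (𝓝 0)

lemma hasBasis_hnhds (w : HC) :
    (hnhds w).HasBasis (fun δ : ℝ => 0 < δ) (fun δ => {q | hnorm (q - w) < δ}) := by
  simpa [hnhds, Set.preimage, abs_of_nonneg (hnorm_nonneg _)] using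
    (Metric.nhds_basis_ball (x := (0 : ℝ))).comap (fun q => hnorm (q - w))

theorem tendstoAt_iff {Φ : HC → HC} {S : Set HC} {w A : HC} :
    TendstoAt Φ S w A ↔ Tendsto Φ (hnhds w ⊓ 𝓟 S) (hnhds A) := by
  rw [((hasBasis_hnhds w).inf_principal S).tendsto_iff (hasBasis_hnhds A)]
  simp only [TendstoAt, Set.mem_inter_iff, Set.mem_ofPred_eq, and_imp, gt_iff_lt]
  exact forall₂_congr fun _ _ => exists_congr fun _ =>
    and_congr_right' <| forall_congr' fun _ => imp.swap

lemma tendsto_hnhds_of_norm_sub_le {Ψ : HC → ℂ} {w : HC}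
    (h : ∀ q, ‖Ψ q - Ψ w‖ ≤ hnorm (q - w)) : Tendsto Ψ (hnhds w) (𝓝 (Ψ w)) :=
  tendsto_iff_norm_sub_tendsto_zero.2 <| squeeze_zero (fun _ => norm_nonneg _) h tendsto_comap

lemma tendsto_coord1_hnhds (w : HC) : Tendsto coord1 (hnhds w) (𝓝 (coord1 w)) :=
  tendsto_hnhds_of_norm_sub_le fun q => by
    rw [show coord1 q - coord1 w = coord1 (q - w) by simp [coord1]; ring]
    exact norm_coord1_le_hnorm (q - w)

lemma tendsto_coord2_hnhds (w : HC) : Tendsto coord2 (hnhds w) (𝓝 (coord2 w)) :=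
  tendsto_hnhds_of_norm_sub_le fun q => by
    rw [show coord2 q - coord2 w = coord2 (q - w) by simp [coord2]; ring]
    exact norm_coord2_le_hnorm (q - w)

lemma tendsto_coord3_hnhds (w : HC) : Tendsto coord3 (hnhds w) (𝓝 (coord3 w)) :=
  tendsto_hnhds_of_norm_sub_le fun q => by
    rw [show coord3 q - coord3 w = coord3 (q - w) by simp [coord3]; ring]
    exact norm_coord3_le_hnorm (q - w)

lemma tendsto_coord4_hnhds (w : HC) : Tendsto coord4 (hnhds w) (𝓝 (coord4 w)) :=
  tendsto_hnhds_of_norm_sub_le fun q => by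
    rw [show coord4 q - coord4 w = coord4 (q - w) by simp [coord4]; ring]
    exact norm_coord4_le_hnorm (q - w)

theorem tendstoAt_of_tendsto_coord {Φ : HC → HC} {S : Set HC} {ζ₀ : HC} {F₁ F₂ F₃ F₄ : ℂ → ℂ}
    (hS : ∀ q ∈ S, coord1 q ≠ coord1 ζ₀ ∧ coord2 q ≠ coord2 ζ₀ ∧
      Φ q = F₁ (coord1 q) • e1 + F₂ (coord2 q) • e2 + F₃ (coord1 q) • e3 + F₄ (coord2 q) • e4)
    {c₁ c₂ c₃ c₄ : ℂ}
    (h₁ : Tendsto F₁ (𝓝[≠] (coord1 ζ₀)) (𝓝 c₁)) (h₂ : Tendsto F₂ (𝓝[≠] (coord2 ζ₀)) (𝓝 c₂))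
    (h₃ : Tendsto F₃ (𝓝[≠] (coord1 ζ₀)) (𝓝 c₃)) (h₄ : Tendsto F₄ (𝓝[≠] (coord2 ζ₀)) (𝓝 c₄)) :
    TendstoAt Φ S ζ₀ (c₁ • e1 + c₂ • e2 + c₃ • e3 + c₄ • e4) := by
  have hS' : ∀ᶠ q in hnhds ζ₀ ⊓ 𝓟 S, _ := eventually_inf_principal.2 (Eventually.of_forall hS)
  have hc₁ : Tendsto coord1 (hnhds ζ₀ ⊓ 𝓟 S) (𝓝[≠] (coord1 ζ₀)) :=
    tendsto_nhdsWithin_iff.2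
      ⟨(tendsto_coord1_hnhds ζ₀).mono_left inf_le_left, hS'.mono fun _ h => h.1⟩
  have hc₂ : Tendsto coord2 (hnhds ζ₀ ⊓ 𝓟 S) (𝓝[≠] (coord2 ζ₀)) :=
    tendsto_nhdsWithin_iff.2
      ⟨(tendsto_coord2_hnhds ζ₀).mono_left inf_le_left, hS'.mono fun _ h => h.2.1⟩
  have hbound : ∀ᶠ q in hnhds ζ₀ ⊓ 𝓟 S, hnorm (Φ q - (c₁ • e1 + c₂ • e2 + c₃ • e3 + c₄ • e4)) ≤
      ‖F₁ (coord1 q) - c₁‖ + ‖F₂ (coord2 q) - c₂‖ + ‖F₃ (coord1 q) - c₃‖ + ‖F₄ (coord2 q) - c₄‖ :=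
    hS'.mono fun q h => by
      rw [h.2.2]
      convert hnorm_combo_le (F₁ (coord1 q) - c₁) (F₂ (coord2 q) - c₂) (F₃ (coord1 q) - c₃)
        (F₄ (coord2 q) - c₄) using 2
      module
  rw [tendstoAt_iff]
  refine tendsto_comap_iff.2 (squeeze_zero' (.of_forall fun _ => hnorm_nonneg _) hbound ?_)
  simpa using ((((h₁.comp hc₁).sub_const c₁).norm.add ((h₂.comp hc₂).sub_const c₂).norm).add
    ((h₃.comp hc₁).sub_const c₃).norm).add ((h₄.comp hc₂).sub_const c₄).norm

def puncturedDisc (c : ℂ) (R : ENNReal) : Set ℂ :=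
  {ξ | 0 < ‖ξ - c‖ ∧ ENNReal.ofReal ‖ξ - c‖ < R}

lemma puncturedDisc_eq (c : ℂ) (R : ENNReal) : puncturedDisc c R = Metric.eball c R \ {c} := by
  ext ξ
  simp [puncturedDisc, Metric.mem_eball, edist_dist, dist_eq_norm, sub_eq_zero, and_comm]

lemma isOpen_puncturedDisc (c : ℂ) (R : ENNReal) : IsOpen (puncturedDisc c R) := by
  rw [puncturedDisc_eq]
  exact Metric.isOpen_eball.sdiff isClosed_singleton

lemma puncturedDisc_mem_nhdsNE (c : ℂ) {R : ENNReal} (hR : 0 < R) : puncturedDisc c R ∈ 𝓝[≠] c := by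
  rw [puncturedDisc_eq]
  exact sdiff_mem_nhdsWithin_compl (Metric.eball_mem_nhds c hR) _

section RealLinear

variable {V : Type*} [AddCommGroup V] [Module ℝ V]

theorem tendsto_nhdsNE_of_tendstoAt {E : Type*} [TopologicalSpace E]
    (f g : V →ₗ[ℝ] ℂ) (hf : Function.Surjective f) {ζ : V → HC}
    (hζ : ∀ p q, hnorm (ζ p - ζ q) ≤ ‖f p - f q‖ + ‖g p - g q‖)
    {Φ : HC → HC} {S : Set HC} {w : V} {A : HC} (hA : TendstoAt Φ S (ζ w) A)
    {U₁ U₂ : Set ℂ} (hU₁ : U₁ ∈ 𝓝[≠] (f w)) (hU₂ : U₂ ∈ 𝓝 (g w))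
    {Ψ : HC → E} (hΨ : Tendsto Ψ (hnhds A) (𝓝 (Ψ A))) {F : ℂ → E}
    (hF : ∀ p, f p ∈ U₁ → g p ∈ U₂ → ζ p ∈ S ∧ Ψ (Φ (ζ p)) = F (f p)) :
    Tendsto F (𝓝[≠] (f w)) (𝓝 (Ψ A)) := by
  -- `lift` runs along a linear section of `f`: `f ∘ lift = id`, and `g ∘ lift` is continuous.
  obtain ⟨σ, hσ⟩ := f.exists_rightInverse_of_surjective (LinearMap.range_eq_top.2 hf)
  set lift : ℂ → V := fun ξ => w + σ (ξ - f w)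
  have hf_lift (ξ : ℂ) : f (lift ξ) = ξ := by
    simp [lift, ← LinearMap.comp_apply f σ, hσ]
  have hg_lift : Tendsto (fun ξ => g (lift ξ)) (𝓝 (f w)) (𝓝 (g w)) := by
    have hgσ : Continuous (g ∘ₗ σ) := LinearMap.continuous_of_finiteDimensional _
    have : Tendsto (fun ξ => g w + (g ∘ₗ σ) (ξ - f w)) (𝓝 (f w)) (𝓝 (g w + (g ∘ₗ σ) (f w - f w))) :=
      (continuous_const.add (hgσ.comp (continuous_id.sub continuous_const))).tendsto _
    simpa [lift] using this
  have hev : ∀ᶠ ξ in 𝓝[≠] (f w), ζ (lift ξ) ∈ S ∧ Ψ (Φ (ζ (lift ξ))) = F ξ := by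
    filter_upwards [hU₁, nhdsWithin_le_nhds (hg_lift hU₂)] with ξ h₁ h₂
    simpa only [hf_lift] using hF (lift ξ) (by rwa [hf_lift]) h₂
  have hζ_lift : Tendsto (fun ξ => ζ (lift ξ)) (𝓝[≠] (f w)) (hnhds (ζ w) ⊓ 𝓟 S) := by
    refine tendsto_inf.2 ⟨tendsto_comap_iff.2 ?_, tendsto_principal.2 (hev.mono fun _ h => h.1)⟩
    refine squeeze_zero (fun _ => hnorm_nonneg _) (fun ξ => hζ _ _) ?_
    simpa [hf_lift] using
      (((tendsto_id.sub_const (f w)).norm.add (hg_lift.sub_const (g w)).norm).mono_left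
        nhdsWithin_le_nhds)
  exact (hΨ.comp ((tendstoAt_iff.1 hA).comp hζ_lift)).congr' (hev.mono fun _ h => h.2)

lemma exists_mem_ker_apply_ne_zero_lt [FiniteDimensional ℝ V] (hV : finrank ℝ ℂ < finrank ℝ V)
    (f g : V →ₗ[ℝ] ℂ) (hinj : ∀ v, f v = 0 → g v = 0 → v = 0) {R : ENNReal} (hR : 0 < R) :
    ∃ v, f v = 0 ∧ g v ≠ 0 ∧ ENNReal.ofReal ‖g v‖ < R := by
  obtain ⟨v, hv, hv0⟩ :=
    Submodule.exists_mem_ne_zero_of_ne_bot (LinearMap.ker_ne_bot_of_finrank_lt hV (f := f))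
  have hgv : g v ≠ 0 := fun h => hv0 (hinj v hv h)
  have hsmall : Tendsto (fun s : ℝ => ENNReal.ofReal ‖g (s • v)‖) (𝓝 0) (𝓝 0) := by
    have : Continuous (fun s : ℝ => ENNReal.ofReal ‖s • g v‖) :=
      ENNReal.continuous_ofReal.comp (by fun_prop)
    simpa using this.tendsto 0
  obtain ⟨s, hsR, hs⟩ := ((hsmall.eventually_lt_const hR).filter_mono nhdsWithin_le_nhds
    |>.and self_mem_nhdsWithin).exists (f := 𝓝[>] (0 : ℝ))
  exact ⟨s • v, by simp [LinearMap.mem_ker.1 hv], by simp [hs.ne', hgv], hsR⟩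

theorem exists_tendsto_nhdsNE_of_tendstoAt_ker {E : Type*} [TopologicalSpace E]
    [FiniteDimensional ℝ V] (hV : finrank ℝ ℂ < finrank ℝ V)
    (f g : V →ₗ[ℝ] ℂ) (hf : Function.Surjective f) (hinj : ∀ v, f v = 0 → g v = 0 → v = 0)
    {ζ : V → HC} (hζ : ∀ p q, hnorm (ζ p - ζ q) ≤ ‖f p - f q‖ + ‖g p - g q‖)
    {Φ : HC → HC} {S : Set HC} {R : ENNReal} (hR : 0 < R) {p₀ : V}
    (hlim : ∀ v, f v = 0 → g v ≠ 0 → ENNReal.ofReal ‖f v‖ < R → ENNReal.ofReal ‖g v‖ < R →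
      ∃ A, TendstoAt Φ S (ζ (p₀ + v)) A)
    {Ψ : HC → E} (hΨ : ∀ A, Tendsto Ψ (hnhds A) (𝓝 (Ψ A))) {F : ℂ → E}
    (hF : ∀ p, f p ∈ puncturedDisc (f p₀) R → g p ∈ puncturedDisc (g p₀) R →
      ζ p ∈ S ∧ Ψ (Φ (ζ p)) = F (f p)) :
    ∃ c, Tendsto F (𝓝[≠] (f p₀)) (𝓝 c) := by
  obtain ⟨v, hfv, hgv, hgvR⟩ := exists_mem_ker_apply_ne_zero_lt hV f g hinj hR
  obtain ⟨A, hA⟩ := hlim v hfv hgv (by simpa [hfv] using hR) hgvR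
  have hfw : f (p₀ + v) = f p₀ := by simp [hfv]
  have hgw : g (p₀ + v) ∈ puncturedDisc (g p₀) R := by simpa [puncturedDisc, hgv] using hgvR
  exact ⟨Ψ A, hfw ▸ tendsto_nhdsNE_of_tendstoAt f g hf hζ hA
    (hfw ▸ puncturedDisc_mem_nhdsNE (f p₀) hR) ((isOpen_puncturedDisc _ _).mem_nhds hgw) (hΨ A) hF⟩

end RealLinear

/-- `f₁ = linForm a₁ b₁` and `f₂ = linForm a₂ b₂`, as functions of the coordinates `(x, y, z)`. -/
def linForm (a b : ℂ) : ℝ × ℝ × ℝ →ₗ[ℝ] ℂ where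
  toFun p := (p.1 : ℂ) + (p.2.1 : ℂ) * a + (p.2.2 : ℂ) * b
  map_add' p q := by simp only [Prod.fst_add, Prod.snd_add, Complex.ofReal_add]; ring
  map_smul' s p := by
    simp only [Prod.smul_fst, Prod.smul_snd, smul_eq_mul, Complex.ofReal_mul, RingHom.id_apply,
      Complex.real_smul]
    ring

lemma one_eq_e1_add_e2 : (1 : HC) = e1 + e2 := by
  rw [e1, e2]
  module

section Coordinates

variable (a₁ a₂ b₁ b₂ : ℂ)

def zetaV (p : ℝ × ℝ × ℝ) : HC := zeta a₁ a₂ b₁ b₂ p.1 p.2.1 p.2.2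

lemma zetaV_eq (p : ℝ × ℝ × ℝ) :
    zetaV a₁ a₂ b₁ b₂ p = linForm a₁ b₁ p • e1 + linForm a₂ b₂ p • e2 := by
  simp only [zetaV, zeta, i2, i3, linForm, LinearMap.coe_mk, AddHom.coe_mk, one_eq_e1_add_e2]
  module

lemma zetaV_add (p q : ℝ × ℝ × ℝ) :
    zetaV a₁ a₂ b₁ b₂ (p + q) = zetaV a₁ a₂ b₁ b₂ p + zetaV a₁ a₂ b₁ b₂ q := by
  rw [zetaV_eq, zetaV_eq, zetaV_eq, map_add, map_add]
  module

lemma hnorm_zetaV_sub_le (p q : ℝ × ℝ × ℝ) :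
    hnorm (zetaV a₁ a₂ b₁ b₂ p - zetaV a₁ a₂ b₁ b₂ q) ≤
      ‖linForm a₁ b₁ p - linForm a₁ b₁ q‖ + ‖linForm a₂ b₂ p - linForm a₂ b₂ q‖ := by
  rw [zetaV_eq, zetaV_eq]
  convert hnorm_pair_le (linForm a₁ b₁ p - linForm a₁ b₁ q) (linForm a₂ b₂ p - linForm a₂ b₂ q)
    using 2
  module

lemma coord1_zetaV (p : ℝ × ℝ × ℝ) : coord1 (zetaV a₁ a₂ b₁ b₂ p) = linForm a₁ b₁ p := by
  rw [zetaV_eq, coord1_pair]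

lemma coord2_zetaV (p : ℝ × ℝ × ℝ) : coord2 (zetaV a₁ a₂ b₁ b₂ p) = linForm a₂ b₂ p := by
  rw [zetaV_eq, coord2_pair]

lemma zetaV_ne_zero {p : ℝ × ℝ × ℝ} (h : linForm a₁ b₁ p ≠ 0 ∨ linForm a₂ b₂ p ≠ 0) :
    zetaV a₁ a₂ b₁ b₂ p ≠ 0 := by
  intro h0
  rw [← coord1_zetaV, ← coord2_zetaV, h0] at h
  simp [coord1, coord2] at h

theorem tendstoAt_K0_of_tendsto {Φ : HC → HC} {F₁ F₂ F₃ F₄ : ℂ → ℂ} {R : ENNReal}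
    {p₀ : ℝ × ℝ × ℝ}
    (hΦ : ∀ p, linForm a₁ b₁ p ∈ puncturedDisc (linForm a₁ b₁ p₀) R →
      linForm a₂ b₂ p ∈ puncturedDisc (linForm a₂ b₂ p₀) R →
      Φ (zetaV a₁ a₂ b₁ b₂ p) = F₁ (linForm a₁ b₁ p) • e1 + F₂ (linForm a₂ b₂ p) • e2 +
        F₃ (linForm a₁ b₁ p) • e3 + F₄ (linForm a₂ b₂ p) • e4)
    {c₁ c₂ c₃ c₄ : ℂ}
    (h₁ : Tendsto F₁ (𝓝[≠] (linForm a₁ b₁ p₀)) (𝓝 c₁))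
    (h₂ : Tendsto F₂ (𝓝[≠] (linForm a₂ b₂ p₀)) (𝓝 c₂))
    (h₃ : Tendsto F₃ (𝓝[≠] (linForm a₁ b₁ p₀)) (𝓝 c₃))
    (h₄ : Tendsto F₄ (𝓝[≠] (linForm a₂ b₂ p₀)) (𝓝 c₄)) :
    TendstoAt Φ (K0 a₁ a₂ b₁ b₂ (linForm a₁ b₁ p₀) (linForm a₂ b₂ p₀) R) (zetaV a₁ a₂ b₁ b₂ p₀)
      (c₁ • e1 + c₂ • e2 + c₃ • e3 + c₄ • e4) := by
  rw [← coord1_zetaV a₁ a₂ b₁ b₂ p₀] at h₁ h₃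
  rw [← coord2_zetaV a₁ a₂ b₁ b₂ p₀] at h₂ h₄
  refine tendstoAt_of_tendsto_coord ?_ h₁ h₂ h₃ h₄
  rintro _ ⟨x, y, z, rfl, hd₁, hd₁R, hd₂, hd₂R⟩
  rw [show zeta a₁ a₂ b₁ b₂ x y z = zetaV a₁ a₂ b₁ b₂ (x, y, z) from rfl,
    hΦ (x, y, z) ⟨hd₁, hd₁R⟩ ⟨hd₂, hd₂R⟩, coord1_zetaV, coord2_zetaV, coord1_zetaV, coord2_zetaV]
  exact ⟨sub_ne_zero.1 (norm_pos_iff.1 hd₁), sub_ne_zero.1 (norm_pos_iff.1 hd₂), rfl⟩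

end Coordinates

theorem isolated_singularity_removable_general
    (a₁ a₂ b₁ b₂ : ℂ)
    (hind : ∀ α β γ : ℝ,
      (α : ℂ) • (1 : HC) + (β : ℂ) • i2 a₁ a₂ + (γ : ℂ) • i3 b₁ b₂ = 0 →
        α = 0 ∧ β = 0 ∧ γ = 0)
    (hsurj1 : ∀ w : ℂ, ∃ x y z : ℝ, w = xi1 a₁ b₁ x y z)
    (hsurj2 : ∀ w : ℂ, ∃ x y z : ℝ, w = xi2 a₂ b₂ x y z)
    (x₀ y₀ z₀ : ℝ) (R : ENNReal) (hR : 0 < R)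
    (F₁ F₂ F₃ F₄ : ℂ → ℂ)
    (Φ : HC → HC)
    (hΦ : ∀ x y z : ℝ,
      0 < ‖xi1 a₁ b₁ x y z - xi1 a₁ b₁ x₀ y₀ z₀‖ →
      ENNReal.ofReal (‖xi1 a₁ b₁ x y z - xi1 a₁ b₁ x₀ y₀ z₀‖) < R →
      0 < ‖xi2 a₂ b₂ x y z - xi2 a₂ b₂ x₀ y₀ z₀‖ →
      ENNReal.ofReal (‖xi2 a₂ b₂ x y z - xi2 a₂ b₂ x₀ y₀ z₀‖) < R →
      Φ (zeta a₁ a₂ b₁ b₂ x y z) =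
        F₁ (xi1 a₁ b₁ x y z) • e1 + F₂ (xi2 a₂ b₂ x y z) • e2 +
        F₃ (xi1 a₁ b₁ x y z) • e3 + F₄ (xi2 a₂ b₂ x y z) • e4)
    (hlim : ∀ u v t : ℝ, (xi1 a₁ b₁ u v t = 0 ∨ xi2 a₂ b₂ u v t = 0) →
      ENNReal.ofReal (‖xi1 a₁ b₁ u v t‖) < R →
      ENNReal.ofReal (‖xi2 a₂ b₂ u v t‖) < R →
      zeta a₁ a₂ b₁ b₂ u v t ≠ 0 →
      ∃ A : HC, TendstoAt Φ (K0 a₁ a₂ b₁ b₂ (xi1 a₁ b₁ x₀ y₀ z₀) (xi2 a₂ b₂ x₀ y₀ z₀) R)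
        (zeta a₁ a₂ b₁ b₂ x₀ y₀ z₀ + zeta a₁ a₂ b₁ b₂ u v t) A) :
    ∃ A : HC, TendstoAt Φ (K0 a₁ a₂ b₁ b₂ (xi1 a₁ b₁ x₀ y₀ z₀) (xi2 a₂ b₂ x₀ y₀ z₀) R) (zeta a₁ a₂ b₁ b₂ x₀ y₀ z₀) A := by
  set f := linForm a₁ b₁
  set g := linForm a₂ b₂
  set p₀ : ℝ × ℝ × ℝ := (x₀, y₀, z₀)
  have hinj (v) (hf : f v = 0) (hg : g v = 0) : v = 0 := by
    obtain ⟨hx, hy, hz⟩ := hind v.1 v.2.1 v.2.2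
      (show zetaV a₁ a₂ b₁ b₂ v = 0 by rw [zetaV_eq, hf, hg]; module)
    exact Prod.ext hx (Prod.ext hy hz)
  have hV : finrank ℝ ℂ < finrank ℝ (ℝ × ℝ × ℝ) := by
    simp [Module.finrank_prod, Complex.finrank_real_complex]
  have hreg (p) (h₁ : f p ∈ puncturedDisc (f p₀) R) (h₂ : g p ∈ puncturedDisc (g p₀) R) :
      zetaV a₁ a₂ b₁ b₂ p ∈ K0 a₁ a₂ b₁ b₂ (f p₀) (g p₀) R ∧
        Φ (zetaV a₁ a₂ b₁ b₂ p) = F₁ (f p) • e1 + F₂ (g p) • e2 + F₃ (f p) • e3 + F₄ (g p) • e4 :=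
    ⟨⟨p.1, p.2.1, p.2.2, rfl, h₁.1, h₁.2, h₂.1, h₂.2⟩, hΦ _ _ _ h₁.1 h₁.2 h₂.1 h₂.2⟩
  obtain ⟨c₁₃, h₁₃⟩ := exists_tendsto_nhdsNE_of_tendstoAt_ker hV f g
    (fun w => let ⟨x, y, z, h⟩ := hsurj1 w; ⟨(x, y, z), h.symm⟩) hinj
    (hnorm_zetaV_sub_le a₁ a₂ b₁ b₂) hR
    (fun v hfv hgv hfR hgR => zetaV_add a₁ a₂ b₁ b₂ p₀ v ▸ hlim v.1 v.2.1 v.2.2 (.inl hfv) hfR hgR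
      (zetaV_ne_zero _ _ _ _ (.inr hgv)))
    (fun A => (tendsto_coord1_hnhds A).prodMk_nhds (tendsto_coord3_hnhds A))
    (F := fun ξ => (F₁ ξ, F₃ ξ))
    (fun p h₁ h₂ => ⟨(hreg p h₁ h₂).1, by rw [(hreg p h₁ h₂).2, coord1_combo, coord3_combo]⟩)
  obtain ⟨c₂₄, h₂₄⟩ := exists_tendsto_nhdsNE_of_tendstoAt_ker hV g f
    (fun w => let ⟨x, y, z, h⟩ := hsurj2 w; ⟨(x, y, z), h.symm⟩) (fun v hg hf => hinj v hf hg)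
    (fun p q => (hnorm_zetaV_sub_le a₁ a₂ b₁ b₂ p q).trans_eq (add_comm _ _)) hR
    (fun v hgv hfv hgR hfR => zetaV_add a₁ a₂ b₁ b₂ p₀ v ▸ hlim v.1 v.2.1 v.2.2 (.inr hgv) hfR hgR
      (zetaV_ne_zero _ _ _ _ (.inl hfv)))
    (fun A => (tendsto_coord2_hnhds A).prodMk_nhds (tendsto_coord4_hnhds A))
    (F := fun ξ => (F₂ ξ, F₄ ξ))
    (fun p h₂ h₁ => ⟨(hreg p h₁ h₂).1, by rw [(hreg p h₁ h₂).2, coord2_combo, coord4_combo]⟩)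
  exact ⟨_, tendstoAt_K0_of_tendsto a₁ a₂ b₁ b₂ (fun p h₁ h₂ => (hreg p h₁ h₂).2)
    h₁₃.fst_nhds h₂₄.fst_nhds h₁₃.snd_nhds h₂₄.snd_nhds⟩

/-- Isolated singularities are removable: if Φ has a finite limit at
every point w ≠ ζ₀ of K̃⁰_ζ ∩ (ζ₀ + (L¹_ζ ∪ L²_ζ)), then Φ also has a finite limit at
ζ₀; an isolated singular point of a G-monogenic mapping can only be removable. -/
theorem isolated_singularity_removable
    (a₁ a₂ b₁ b₂ : ℂ)
    (hind : ∀ α β γ : ℝ,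
      (α : ℂ) • (1 : HC) + (β : ℂ) • i2 a₁ a₂ + (γ : ℂ) • i3 b₁ b₂ = 0 →
        α = 0 ∧ β = 0 ∧ γ = 0)
    (hsurj1 : ∀ w : ℂ, ∃ x y z : ℝ, w = xi1 a₁ b₁ x y z)
    (hsurj2 : ∀ w : ℂ, ∃ x y z : ℝ, w = xi2 a₂ b₂ x y z)
    (x₀ y₀ z₀ : ℝ) (R : ENNReal) (hR : 0 < R)
    (F₁ F₂ F₃ F₄ : ℂ → ℂ)
    (hF₁ : DifferentiableOn ℂ F₁
      {ξ : ℂ | 0 < ‖ξ - xi1 a₁ b₁ x₀ y₀ z₀‖ ∧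
        ENNReal.ofReal (‖ξ - xi1 a₁ b₁ x₀ y₀ z₀‖) < R})
    (hF₃ : DifferentiableOn ℂ F₃
      {ξ : ℂ | 0 < ‖ξ - xi1 a₁ b₁ x₀ y₀ z₀‖ ∧
        ENNReal.ofReal (‖ξ - xi1 a₁ b₁ x₀ y₀ z₀‖) < R})
    (hF₂ : DifferentiableOn ℂ F₂
      {ξ : ℂ | 0 < ‖ξ - xi2 a₂ b₂ x₀ y₀ z₀‖ ∧
        ENNReal.ofReal (‖ξ - xi2 a₂ b₂ x₀ y₀ z₀‖) < R})
    (hF₄ : DifferentiableOn ℂ F₄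
      {ξ : ℂ | 0 < ‖ξ - xi2 a₂ b₂ x₀ y₀ z₀‖ ∧
        ENNReal.ofReal (‖ξ - xi2 a₂ b₂ x₀ y₀ z₀‖) < R})
    (Φ : HC → HC)
    (hΦ : ∀ x y z : ℝ,
      0 < ‖xi1 a₁ b₁ x y z - xi1 a₁ b₁ x₀ y₀ z₀‖ →
      ENNReal.ofReal (‖xi1 a₁ b₁ x y z - xi1 a₁ b₁ x₀ y₀ z₀‖) < R →
      0 < ‖xi2 a₂ b₂ x y z - xi2 a₂ b₂ x₀ y₀ z₀‖ →
      ENNReal.ofReal (‖xi2 a₂ b₂ x y z - xi2 a₂ b₂ x₀ y₀ z₀‖) < R →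
      Φ (zeta a₁ a₂ b₁ b₂ x y z) =
        F₁ (xi1 a₁ b₁ x y z) • e1 + F₂ (xi2 a₂ b₂ x y z) • e2 +
        F₃ (xi1 a₁ b₁ x y z) • e3 + F₄ (xi2 a₂ b₂ x y z) • e4)
    (hlim : ∀ u v t : ℝ, (xi1 a₁ b₁ u v t = 0 ∨ xi2 a₂ b₂ u v t = 0) →
      ENNReal.ofReal (‖xi1 a₁ b₁ u v t‖) < R →
      ENNReal.ofReal (‖xi2 a₂ b₂ u v t‖) < R →
      zeta a₁ a₂ b₁ b₂ u v t ≠ 0 →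
      ∃ A : HC, TendstoAt Φ (K0 a₁ a₂ b₁ b₂ (xi1 a₁ b₁ x₀ y₀ z₀) (xi2 a₂ b₂ x₀ y₀ z₀) R)
        (zeta a₁ a₂ b₁ b₂ x₀ y₀ z₀ + zeta a₁ a₂ b₁ b₂ u v t) A) :
    ∃ A : HC, TendstoAt Φ (K0 a₁ a₂ b₁ b₂ (xi1 a₁ b₁ x₀ y₀ z₀) (xi2 a₂ b₂ x₀ y₀ z₀) R) (zeta a₁ a₂ b₁ b₂ x₀ y₀ z₀) A :=
  isolated_singularity_removable_general a₁ a₂ b₁ b₂ hind hsurj1 hsurj2 x₀ y₀ z₀ R hR F₁ F₂ F₃ F₄ Φ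
    hΦ hlim
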